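/- In the regret game, if v < 1/p, then for every player i, every action profile a, and every state of the other players' actions, the expected payoff from choosing safe strictly exceeds the expected payoff from choosing risky (i.e., safe is a strictly dominant action); consequently, the profile in which every player chooses safe is a pure strategy Nash equilibrium and it is the unique pure strategy Nash equilibrium. -/

import Mathlib

namespace RegretGame

/-- An action in the regret game: choose the risky lottery or the safe lottery. -/
inductive Act : Type
  | risky : Act
  | safe : Act
deriving DecidableEq, Repr

/-- `numRisky a i` is the number of players other than `i` choosing the risky lottery
at the action profile `a`. -/
def numRisky {N : ℕ} (a : Fin N → Act) (i : Fin N) : ℕ :=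
  (Finset.univ.filter (fun j => j ≠ i ∧ a j = Act.risky)).card

/-- Player `i`'s expected payoff in the regret game at action profile `a`, given the
success probability `p`, coefficient of regret aversion `κ`, normalized good-state
payoff `v` of the risky lottery, and the information function `q` (the probability of
learning the risky outcome, as a function of how many of the others chose risky). -/
noncomputable def payoff {N : ℕ} (p κ v : ℝ) (q : ℕ → ℝ)
    (a : Fin N → Act) (i : Fin N) : ℝ :=
  if a i = Act.risky then p * v - (1 - p) * κ
  else 1 - p * q (numRisky a i) * κ * (v - 1)

/-- A pure strategy Nash equilibrium of the regret game: no player can strictly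
increase her expected payoff by unilaterally changing her own action. -/
def IsNash {N : ℕ} (p κ v : ℝ) (q : ℕ → ℝ) (a : Fin N → Act) : Prop :=
  ∀ (i : Fin N) (b : Act),
    payoff p κ v q (Function.update a i b) i ≤ payoff p κ v q a i

def SafeStrictlyDominant {N : ℕ} (p κ v : ℝ) (q : ℕ → ℝ) : Prop :=
  ∀ (a : Fin N → Act) (i : Fin N),
    payoff p κ v q (Function.update a i Act.risky) i <
      payoff p κ v q (Function.update a i Act.safe) i

theorem numRisky_le {N : ℕ} (a : Fin N → Act) (i : Fin N) : numRisky a i ≤ N - 1 :=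
  calc numRisky a i ≤ (Finset.univ.erase i).card :=
        Finset.card_le_card fun j hj =>
          Finset.mem_erase.mpr ⟨(Finset.mem_filter.mp hj).2.1, Finset.mem_univ j⟩
    _ = N - 1 := by
      rw [Finset.card_erase_of_mem (Finset.mem_univ i), Finset.card_univ, Fintype.card_fin]

section Payoff

variable {N : ℕ} (p κ v : ℝ) (q : ℕ → ℝ) (a : Fin N → Act) (i : Fin N)

theorem payoff_update_risky :
    payoff p κ v q (Function.update a i Act.risky) i = p * v - (1 - p) * κ := by
  simp [payoff]

theorem payoff_update_safe :
    payoff p κ v q (Function.update a i Act.safe) i =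
      1 - p * q (numRisky (Function.update a i Act.safe) i) * κ * (v - 1) := by
  simp [payoff]

end Payoff

/-- Even at full information (`r = 1`) the regret of the safe choice is too small to offset
the loss in expected value: the gap is `(1 + κ) (1 - p v)`. -/
theorem risky_payoff_lt_safe_payoff {p κ v r : ℝ} (hp : 0 ≤ p) (hκ : 0 ≤ κ) (hv : 1 ≤ v)
    (hr : r ≤ 1) (hpv : p * v < 1) :
    p * v - (1 - p) * κ < 1 - p * r * κ * (v - 1) := by
  have hregret : p * r * κ * (v - 1) ≤ p * κ * (v - 1) := by
    have := mul_nonneg (mul_nonneg hp hκ) (sub_nonneg.mpr hv)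
    nlinarith
  nlinarith

theorem safeStrictlyDominant_of_lt_inv {N : ℕ} {p κ v : ℝ} {q : ℕ → ℝ} (hp : 0 < p)
    (hκ : 0 ≤ κ) (hv : 1 ≤ v) (hq : ∀ m ≤ N - 1, q m ≤ 1) (hdom : v < 1 / p) :
    SafeStrictlyDominant (N := N) p κ v q := by
  intro a i
  rw [payoff_update_risky, payoff_update_safe]
  have hpv : p * v < 1 := by rwa [lt_div_iff₀ hp, mul_comm] at hdom
  exact risky_payoff_lt_safe_payoff hp.le hκ hv (hq _ (numRisky_le _ i)) hpv

namespace SafeStrictlyDominant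

variable {N : ℕ} {p κ v : ℝ} {q : ℕ → ℝ}

theorem isNash_const_safe (h : SafeStrictlyDominant (N := N) p κ v q) :
    IsNash p κ v q (fun _ : Fin N => Act.safe) := by
  intro i b
  have hfix : Function.update (fun _ : Fin N => Act.safe) i Act.safe = fun _ => Act.safe :=
    Function.update_eq_self i _
  cases b with
  | risky => simpa only [hfix] using (h (fun _ => Act.safe) i).le
  | safe => rw [hfix]

theorem eq_const_safe_of_isNash (h : SafeStrictlyDominant (N := N) p κ v q)
    {a : Fin N → Act} (ha : IsNash p κ v q a) : a = fun _ => Act.safe := by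
  funext i
  cases hai : a i with
  | safe => rfl
  | risky =>
    have hfix : Function.update a i Act.risky = a := hai ▸ Function.update_eq_self i a
    have hlt := h a i
    rw [hfix] at hlt
    exact absurd (ha i Act.safe) (not_le.mpr hlt)

end SafeStrictlyDominant

theorem regret_game_safe_dominant_general
    (N : ℕ) (p κ v : ℝ)
    (hp : 0 < p ∧ p < 1) (hκ : 0 < κ) (hv : 1 < v)
    (q : ℕ → ℝ)
    (hq01 : ∀ m ≤ N - 1, 0 ≤ q m ∧ q m ≤ 1)
    (hdom : v < 1 / p) :
    (∀ (a : Fin N → Act) (i : Fin N),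
        payoff p κ v q (Function.update a i Act.risky) i <
          payoff p κ v q (Function.update a i Act.safe) i) ∧
    IsNash p κ v q (fun _ : Fin N => Act.safe) ∧
    (∀ a : Fin N → Act, IsNash p κ v q a → a = fun _ : Fin N => Act.safe) := by
  have h : SafeStrictlyDominant (N := N) p κ v q :=
    safeStrictlyDominant_of_lt_inv hp.1 hκ.le hv.le (fun m hm => (hq01 m hm).2) hdom
  exact ⟨h, h.isNash_const_safe, fun _ => h.eq_const_safe_of_isNash⟩

/-- **Theorem 3, part 1.** If `v < 1/p`, then safe is a strictly dominant action for
every player, the all-safe profile is a pure strategy Nash equilibrium, and it is the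
unique pure strategy Nash equilibrium of the regret game. -/
theorem regret_game_safe_dominant
    (N : ℕ) (hN : 2 ≤ N) (p κ v : ℝ)
    (hp : 0 < p ∧ p < 1) (hκ : 0 < κ) (hv : 1 < v)
    (q : ℕ → ℝ)
    (hq01 : ∀ m ≤ N - 1, 0 ≤ q m ∧ q m ≤ 1)
    (hq0 : q 0 = 0) (hqN : q (N - 1) = 1)
    (hqmono : ∀ m₁ m₂, m₁ < m₂ → m₂ ≤ N - 1 → q m₁ < q m₂)
    (hdom : v < 1 / p) :
    (∀ (a : Fin N → Act) (i : Fin N),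
        payoff p κ v q (Function.update a i Act.risky) i <
          payoff p κ v q (Function.update a i Act.safe) i) ∧
    IsNash p κ v q (fun _ : Fin N => Act.safe) ∧
    (∀ a : Fin N → Act, IsNash p κ v q a → a = fun _ : Fin N => Act.safe) :=
  regret_game_safe_dominant_general N p κ v hp hκ hv q hq01 hdom

end RegretGame
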